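/- arXiv:2401.17962 — 5 statements merged into one kernel-verified Lean document; each statement's English description precedes it below -/
import Mathlib

section
/- Let P be a set of primes and q a prime not in P. Then no nonzero element of Δ[P] is q-divisible in Δ[P]. -/
/-!
Every element of `Δ[P]` has `q`-adic norm at most `1`, because the generators `m / (p₁ ⋯ pₙ)`
have denominators prime to `q` and the `q`-adic norm is non-archimedean. If `a = qⁿ x` with
`‖x‖_q ≤ 1`, then `‖a‖_q ≤ q⁻ⁿ`; for `a ≠ 0` this fails once `n` is large.
-/

def Delta (P : Set ℕ) : AddSubgroup ℚ :=
  AddSubgroup.closure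
    {x : ℚ | ∃ (m : ℤ) (l : List ℕ), (∀ p ∈ l, p ∈ P) ∧ x = (m : ℚ) / (l.prod : ℕ)}

def padicIntegralSubgroup (q : ℕ) [Fact q.Prime] : AddSubgroup ℚ where
  carrier := {x | padicNorm q x ≤ 1}
  zero_mem' := by simp
  add_mem' hx hy := padicNorm.nonarchimedean.trans (max_le hx hy)
  neg_mem' hx := by simpa only [Set.mem_ofPred_eq, padicNorm.neg] using hx

theorem mem_padicIntegralSubgroup {q : ℕ} [Fact q.Prime] {x : ℚ} :
    x ∈ padicIntegralSubgroup q ↔ padicNorm q x ≤ 1 :=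
  Iff.rfl

theorem eq_zero_of_forall_pow_zsmul_eq {q : ℕ} [Fact q.Prime] {a : ℚ}
    (h : ∀ n : ℕ, ∃ x ∈ padicIntegralSubgroup q, ((q : ℤ) ^ n) • x = a) : a = 0 := by
  by_contra ha
  obtain ⟨n, hn⟩ := exists_pow_lt_of_lt_one
    ((padicNorm.nonneg (p := q) a).lt_of_ne' (padicNorm.nonzero ha))
    (padicNorm.padicNorm_p_lt_one_of_prime (p := q))
  obtain ⟨x, hx, rfl⟩ := h n
  refine hn.not_ge ?_
  calc padicNorm q (((q : ℤ) ^ n) • x)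
      = padicNorm q q ^ n * padicNorm q x := by
        rw [zsmul_eq_mul, Int.cast_pow, Int.cast_natCast, padicNorm.mul,
          IsAbsoluteValue.abv_pow (padicNorm q)]
    _ ≤ padicNorm q q ^ n :=
        mul_le_of_le_one_right (pow_nonneg (padicNorm.nonneg _) n) hx

theorem Delta_le_padicIntegralSubgroup {P : Set ℕ} (hP : ∀ p ∈ P, p.Prime) {q : ℕ}
    [hq : Fact q.Prime] (hqP : q ∉ P) : Delta P ≤ padicIntegralSubgroup q := by
  refine (AddSubgroup.closure_le _).mpr ?_
  rintro _ ⟨m, l, hl, rfl⟩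
  have hq_not_dvd : ¬ q ∣ l.prod := fun hdvd => by
    obtain ⟨p, hpl, hqp⟩ := hq.out.prime.dvd_prod_iff.mp hdvd
    rw [(Nat.prime_dvd_prime_iff_eq hq.out (hP p (hl p hpl))).mp hqp] at hqP
    exact hqP (hl p hpl)
  rw [SetLike.mem_coe, mem_padicIntegralSubgroup, padicNorm.div,
    (padicNorm.nat_eq_one_iff _).mpr hq_not_dvd, div_one]
  exact padicNorm.of_int m

theorem stmt_5_general (P : Set ℕ) (hP : ∀ p ∈ P, p.Prime) (q : ℕ) (hq : q.Prime) (hqP : q ∉ P)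
    (a : ℚ) (ha0 : a ≠ 0) :
    ¬ ∀ n : ℕ, ∃ x ∈ Delta P, ((q : ℤ) ^ n) • x = a := by
  have : Fact q.Prime := ⟨hq⟩
  intro h
  refine ha0 (eq_zero_of_forall_pow_zsmul_eq (q := q) fun n => ?_)
  obtain ⟨x, hx, hxa⟩ := h n
  exact ⟨x, Delta_le_padicIntegralSubgroup hP hqP hx, hxa⟩

/-- if `q` is a prime not in `P`, no nonzero element of `Δ[P]` is
`q`-divisible in `Δ[P]`. -/
theorem stmt_5 (P : Set ℕ) (hP : ∀ p ∈ P, p.Prime) (q : ℕ) (hq : q.Prime) (hqP : q ∉ P)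
    (a : ℚ) (ha : a ∈ Delta P) (ha0 : a ≠ 0) :
    ¬ ∀ n : ℕ, ∃ x ∈ Delta P, ((q : ℤ) ^ n) • x = a :=
  stmt_5_general P hP q hq hqP a ha0
end

section
/- If P and P' are sets of primes with P ⊄ P', then there is no injective group homomorphism from Δ[P] into Δ[P']. -/
lemma div_prod_mem_Delta {P : Set ℕ} (m : ℤ) {l : List ℕ} (hl : ∀ p ∈ l, p ∈ P) :
    (m : ℚ) / (l.prod : ℕ) ∈ Delta P :=
  AddSubgroup.subset_closure ⟨m, l, hl, rfl⟩

lemma one_mem_Delta (P : Set ℕ) : (1 : ℚ) ∈ Delta P := by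
  simpa using div_prod_mem_Delta (P := P) 1 (l := []) (by simp)

lemma not_dvd_den_of_mem_Delta {P : Set ℕ} (hP : ∀ q ∈ P, q.Prime) {p : ℕ} (hp : p.Prime)
    (hpP : p ∉ P) {x : ℚ} (hx : x ∈ Delta P) : ¬ p ∣ x.den := by
  induction hx using AddSubgroup.closure_induction with
  | mem x hx =>
    obtain ⟨m, l, hl, rfl⟩ := hx
    intro hpx
    have hpl : p ∣ l.prod := by
      refine hpx.trans ?_
      have := Rat.den_dvd m l.prod
      rw [Rat.divInt_eq_div, Int.cast_natCast] at this
      exact_mod_cast this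
    obtain ⟨q, hql, hpq⟩ := hp.prime.dvd_prod_iff.mp hpl
    rw [(Nat.prime_dvd_prime_iff_eq hp (hP q (hl q hql))).mp hpq] at hpP
    exact hpP (hl q hql)
  | zero => simpa using hp.ne_one
  | add x y _ _ hx hy =>
    intro hpxy
    rcases hp.dvd_mul.mp (hpxy.trans (Rat.add_den_dvd x y)) with h | h
    exacts [hx h, hy h]
  | neg x _ hx => simpa using hx

lemma exists_eq_mul_of_mem_Delta {P : Set ℕ} {p : ℕ} (hp : p ≠ 0) (hpP : p ∈ P) {x : ℚ}
    (hx : x ∈ Delta P) : ∃ y ∈ Delta P, x = p * y := by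
  induction hx using AddSubgroup.closure_induction with
  | mem x hx =>
    obtain ⟨m, l, hl, rfl⟩ := hx
    refine ⟨m / ((p :: l).prod : ℕ), div_prod_mem_Delta m ?_, ?_⟩
    · simpa using ⟨hpP, hl⟩
    · have : (p : ℚ) ≠ 0 := by exact_mod_cast hp
      rw [List.prod_cons, Nat.cast_mul, ← div_div, div_right_comm, mul_div_cancel₀ _ this]
  | zero => exact ⟨0, zero_mem _, (mul_zero _).symm⟩
  | add x y _ _ hx hy =>
    obtain ⟨a, ha, rfl⟩ := hx
    obtain ⟨b, hb, rfl⟩ := hy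
    exact ⟨a + b, add_mem ha hb, (mul_add _ _ _).symm⟩
  | neg x _ hx =>
    obtain ⟨a, ha, rfl⟩ := hx
    exact ⟨-a, neg_mem ha, (mul_neg _ _).symm⟩

lemma exists_eq_pow_mul_of_mem_Delta {P : Set ℕ} {p : ℕ} (hp : p ≠ 0) (hpP : p ∈ P) {x : ℚ}
    (hx : x ∈ Delta P) (n : ℕ) : ∃ y ∈ Delta P, x = p ^ n * y := by
  induction n with
  | zero => exact ⟨x, hx, (one_mul x).symm⟩
  | succ n ih =>
    obtain ⟨y, hy, rfl⟩ := ih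
    obtain ⟨z, hz, rfl⟩ := exists_eq_mul_of_mem_Delta hp hpP hy
    exact ⟨z, hz, by ring⟩

lemma Rat.eq_zero_of_forall_eq_prime_pow_mul {p : ℕ} (hp : p.Prime) {x : ℚ}
    (h : ∀ n : ℕ, ∃ y : ℚ, ¬ p ∣ y.den ∧ x = p ^ n * y) : x = 0 := by
  have := Fact.mk hp
  by_contra hx
  obtain ⟨y, hy, hxy⟩ := h ((padicValRat p x).toNat + 1)
  have hy0 : y ≠ 0 := right_ne_zero_of_mul (hxy ▸ hx)
  have hvy : 0 ≤ padicValRat p y := by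
    simp [padicValRat_def, padicValNat.eq_zero_of_not_dvd hy]
  have hvx : padicValRat p x = ((padicValRat p x).toNat + 1 : ℕ) + padicValRat p y := by
    conv_lhs => rw [hxy]
    rw [padicValRat.mul (pow_ne_zero _ (by exact_mod_cast hp.ne_zero)) hy0, padicValRat.pow,
      padicValRat.self hp.one_lt, mul_one]
  omega

/-- if `P ⊄ P'` are sets of primes, there is no injective group homomorphism
from `Δ[P]` into `Δ[P']`. -/
theorem stmt_6 (P P' : Set ℕ) (hP : ∀ p ∈ P, p.Prime) (hP' : ∀ p ∈ P', p.Prime)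
    (hPP' : ¬ P ⊆ P') :
    ¬ ∃ f : Delta P →+ Delta P', Function.Injective f := by
  rintro ⟨f, hf⟩
  obtain ⟨p, hpP, hpP'⟩ := Set.not_subset.mp hPP'
  have hp := hP p hpP
  let one : Delta P := ⟨1, one_mem_Delta P⟩
  have hf_one : (f one : ℚ) = 0 := by
    refine Rat.eq_zero_of_forall_eq_prime_pow_mul hp fun n => ?_
    obtain ⟨y, hy, hy_one⟩ := exists_eq_pow_mul_of_mem_Delta hp.ne_zero hpP one.2 n
    have hone : one = (p ^ n : ℕ) • ⟨y, hy⟩ := by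
      ext
      simpa using hy_one
    refine ⟨f ⟨y, hy⟩, not_dvd_den_of_mem_Delta hP' hp hpP' (f ⟨y, hy⟩).2, ?_⟩
    rw [hone, map_nsmul, AddSubgroup.coe_nsmul, nsmul_eq_mul, Nat.cast_pow]
  have hone_zero : one = 0 := hf <| by rw [map_zero]; exact Subtype.ext hf_one
  exact one_ne_zero (congrArg Subtype.val hone_zero)
end

section
/- Let P, P' be sets of primes with P ⊄ P' and let F be the group of finitary permutations of ℕ. Then there is no injective group homomorphism from Δ[P] × F into Δ[P'] × F. -/
/-- The group of finitary permutations of `ℕ`: permutations moving only finitely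
many points. -/
def FinitaryPerm : Subgroup (Equiv.Perm ℕ) where
  carrier := {f | {n | f n ≠ n}.Finite}
  one_mem' := by simp
  mul_mem' := by
    intro a b ha hb
    refine Set.Finite.subset (hb.union ha) fun n hn => ?_
    rw [Set.mem_union]
    by_contra h
    push_neg at h
    obtain ⟨h1, h2⟩ := h
    simp only [Set.mem_setOf_eq, not_not] at h1 h2
    exact hn (by simp [Equiv.Perm.mul_apply, h1, h2])
  inv_mem' := by
    intro a ha
    refine Set.Finite.subset ha fun n hn => ?_
    simp only [Set.mem_setOf_eq] at hn ⊢
    intro h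
    exact hn (by simpa using congrArg (⇑a⁻¹) h.symm)

/-!
The element `1` of `Δ[P]` has infinite order and is divisible by every power of a prime
`p ∈ P \ P'`; an injective homomorphism preserves both properties. In `Δ[P'] × F` a
`p`-power-divisible element has trivial first coordinate, since the `p`-adic valuation of a
nonzero `p ^ n * y` with `y ∈ Δ[P']` is at least `n`; it is therefore of finite order, `F`
being a torsion group.
-/

open Multiplicative

lemma FinitaryPerm.isMulTorsion : IsMulTorsion FinitaryPerm := by
  rintro ⟨σ, hσ⟩
  have : Finite {n | σ n ≠ n} := hσ
  have hS : ∀ n, σ n ∈ {n | σ n ≠ n} ↔ n ∈ {n | σ n ≠ n} := fun n => σ.injective.ne_iff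
  rw [← (Subgroup.subtype_injective FinitaryPerm).isOfFinOrder_iff]
  change IsOfFinOrder σ
  rw [← Equiv.Perm.ofSubtype_subtypePerm hS fun _ h => h]
  exact Equiv.Perm.ofSubtype.isOfFinOrder (isOfFinOrder_of_finite _)

def IsPDivisible {G : Type*} [Monoid G] (p : ℕ) (x : G) : Prop :=
  ∀ n : ℕ, ∃ y : G, y ^ p ^ n = x

lemma IsPDivisible.map {G H : Type*} [Monoid G] [Monoid H] (f : G →* H) {p : ℕ} {x : G}
    (hx : IsPDivisible p x) : IsPDivisible p (f x) := fun n =>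
  let ⟨y, hy⟩ := hx n
  ⟨f y, by rw [← map_pow, hy]⟩

namespace Delta

lemma one_mem (P : Set ℕ) : (1 : ℚ) ∈ Delta P :=
  AddSubgroup.subset_closure ⟨1, [], by simp, by simp⟩

lemma inv_pow_mem {P : Set ℕ} {p : ℕ} (hp : p ∈ P) (n : ℕ) : ((p : ℚ) ^ n)⁻¹ ∈ Delta P := by
  refine AddSubgroup.subset_closure ⟨1, List.replicate n p, fun q hq => ?_, ?_⟩
  · rwa [List.eq_of_mem_replicate hq]
  · simp

lemma isPDivisible_ofAdd_one {P : Set ℕ} {p : ℕ} (hp : p ∈ P) (hp0 : p ≠ 0) :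
    IsPDivisible p (ofAdd (⟨1, one_mem P⟩ : Delta P)) := fun n =>
  ⟨ofAdd ⟨((p : ℚ) ^ n)⁻¹, inv_pow_mem hp n⟩, by
    rw [← ofAdd_nsmul]
    congr 1
    ext
    simp [hp0]⟩

lemma not_isOfFinOrder_ofAdd {P : Set ℕ} {x : Delta P} (hx : x ≠ 0) :
    ¬ IsOfFinOrder (ofAdd x) := by
  rw [isOfFinOrder_ofAdd_iff]
  exact not_isOfFinAddOrder_of_isAddTorsionFree hx

lemma not_dvd_den {P : Set ℕ} (hP : ∀ q ∈ P, q.Prime) {p : ℕ} (hp : p.Prime)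
    (hpP : p ∉ P) {x : ℚ} (hx : x ∈ Delta P) : ¬ p ∣ x.den := by
  induction hx using AddSubgroup.closure_induction with
  | mem y hy =>
    obtain ⟨m, l, hl, rfl⟩ := hy
    intro hdvd
    have hden : ((m : ℚ) / (l.prod : ℕ)).den ∣ l.prod := by
      rw [← Int.cast_natCast, ← Rat.divInt_eq_div]
      exact_mod_cast Rat.den_dvd m (l.prod : ℤ)
    obtain ⟨q, hq, hpq⟩ := hp.prime.dvd_prod_iff.1 (hdvd.trans hden)
    rw [(Nat.prime_dvd_prime_iff_eq hp (hP q (hl q hq))).1 hpq] at hpP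
    exact hpP (hl q hq)
  | zero => simpa using hp.one_lt.ne'
  | add a b _ _ ha hb =>
    intro hdvd
    exact (hp.prime.dvd_mul.1 (hdvd.trans (Rat.add_den_dvd a b))).elim ha hb
  | neg a _ ha => simpa using ha

lemma padicValRat_nonneg {P : Set ℕ} (hP : ∀ q ∈ P, q.Prime) {p : ℕ} [Fact p.Prime]
    (hpP : p ∉ P) {x : ℚ} (hx : x ∈ Delta P) : 0 ≤ padicValRat p x := by
  rw [padicValRat, padicValNat.eq_zero_of_not_dvd (not_dvd_den hP Fact.out hpP hx)]
  simp

lemma eq_zero_of_forall_eq_pow_mul {P : Set ℕ} (hP : ∀ q ∈ P, q.Prime) {p : ℕ} [Fact p.Prime]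
    (hpP : p ∉ P) {x : ℚ} (hx : ∀ n : ℕ, ∃ y ∈ Delta P, x = p ^ n * y) : x = 0 := by
  by_contra hx0
  have hp0 : (p : ℚ) ≠ 0 := by exact_mod_cast (Fact.out : p.Prime).ne_zero
  have hval_ge : ∀ n : ℕ, (n : ℤ) ≤ padicValRat p x := fun n => by
    obtain ⟨y, hyP, rfl⟩ := hx n
    rw [padicValRat.mul (pow_ne_zero _ hp0) (right_ne_zero_of_mul hx0), padicValRat.pow,
      padicValRat.self (Fact.out : p.Prime).one_lt, mul_one]
    linarith [padicValRat_nonneg hP hpP hyP]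
  have := hval_ge ((padicValRat p x).toNat + 1)
  omega

end Delta

lemma isOfFinOrder_of_isPDivisible {P : Set ℕ} (hP : ∀ q ∈ P, q.Prime) {p : ℕ} [Fact p.Prime]
    (hpP : p ∉ P) {H : Type*} [Monoid H] (hH : IsMulTorsion H)
    {x : Multiplicative (Delta P) × H} (hx : IsPDivisible p x) : IsOfFinOrder x := by
  have hx₁ : x.1 = 1 := by
    suffices (x.1.toAdd : ℚ) = 0 by simpa using this
    refine Delta.eq_zero_of_forall_eq_pow_mul hP hpP fun n => ?_
    obtain ⟨y, rfl⟩ := hx n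
    exact ⟨y.1.toAdd, y.1.toAdd.2, by simp⟩
  rw [← Prod.mk.eta (p := x), hx₁]
  exact IsOfFinOrder.one.prod_mk (hH _)

/-- if `P ⊄ P'` are sets of primes, there is no injective group homomorphism
from `Δ[P] × F` into `Δ[P'] × F`, where `F` is the finitary symmetric group on `ℕ`. -/
theorem stmt_8 (P P' : Set ℕ) (hP : ∀ p ∈ P, p.Prime) (hP' : ∀ p ∈ P', p.Prime)
    (hPP' : ¬ P ⊆ P') :
    ¬ ∃ f : Multiplicative (Delta P) × FinitaryPerm →*
        Multiplicative (Delta P') × FinitaryPerm, Function.Injective f := by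
  rintro ⟨f, hf⟩
  obtain ⟨p, hpP, hpP'⟩ := Set.not_subset.1 hPP'
  have : Fact p.Prime := ⟨hP p hpP⟩
  let g := f.comp (MonoidHom.inl _ FinitaryPerm)
  have hg : Function.Injective g := hf.comp (Prod.mk_left_injective 1)
  refine Delta.not_isOfFinOrder_ofAdd (P := P) (x := ⟨1, Delta.one_mem P⟩)
    (by simp) (hg.isOfFinOrder_iff.1 ?_)
  exact isOfFinOrder_of_isPDivisible hP' hpP' FinitaryPerm.isMulTorsion
    ((Delta.isPDivisible_ofAdd_one hpP (hP p hpP).ne_zero).map g)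
end

section
/- There exist 2^ℵ₀ countable groups that are pairwise non-embeddable, i.e., a family (G_i) of countably infinite groups indexed by a set of cardinality 2^ℵ₀ such that for i ≠ j there is no injective group homomorphism from G_i into G_j. -/
/-!
Let `Δ[P] ≤ ℚ` be the group of rationals whose denominators have all prime factors in `P`.
A homomorphism `Δ[P] → Δ[Q]` sends `1`, which is divisible by every power of a prime
`p ∈ P \ Q`, to an element with the same property; but elements of `Δ[Q]` have nonnegative
`p`-adic valuation, so such an element has infinite valuation and is `0`. Hence `Δ[P]` embeds
in `Δ[Q]` only if `P ⊆ Q`, and an antichain of `2 ^ ℵ₀` sets of primes gives the family.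
-/

def Rat.denSupportedIn (P : Set ℕ) : AddSubgroup ℚ where
  carrier := {q | ∀ p : ℕ, p.Prime → p ∣ q.den → p ∈ P}
  zero_mem' p hp hdvd := absurd (Nat.dvd_one.mp hdvd) hp.ne_one
  add_mem' {a b} ha hb p hp hdvd :=
    (hp.dvd_mul.mp (hdvd.trans (Rat.add_den_dvd a b))).elim (ha p hp) (hb p hp)
  neg_mem' {a} ha p hp hdvd := ha p hp (by rwa [Rat.neg_den] at hdvd)

namespace Rat.denSupportedIn

variable {P : Set ℕ}

theorem intCast_mem (n : ℤ) : (n : ℚ) ∈ denSupportedIn P := fun p hp hdvd => by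
  rw [Rat.den_intCast, Nat.dvd_one] at hdvd
  exact absurd hdvd hp.ne_one

theorem inv_prime_pow_mem {p : ℕ} (hp : p.Prime) (hpP : p ∈ P) (n : ℕ) :
    ((p : ℚ) ^ n)⁻¹ ∈ denSupportedIn P := fun r hr hdvd => by
  rw [← Nat.cast_pow, Rat.inv_natCast_den, if_neg (pow_ne_zero n hp.ne_zero)] at hdvd
  rwa [(Nat.prime_dvd_prime_iff_eq hr hp).mp (hr.dvd_of_dvd_pow hdvd)]

theorem padicValRat_nonneg {p : ℕ} (hp : p.Prime) (hpP : p ∉ P) {q : ℚ}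
    (hq : q ∈ denSupportedIn P) : 0 ≤ padicValRat p q := by
  have hden : padicValNat p q.den = 0 :=
    padicValNat.eq_zero_of_not_dvd fun hdvd => hpP (hq p hp hdvd)
  simp [padicValRat, hden]

instance : Infinite (denSupportedIn P) :=
  Infinite.of_injective (fun n : ℤ => ⟨n, intCast_mem n⟩)
    fun _ _ h => Int.cast_injective (congrArg Subtype.val h)

theorem not_injective_addMonoidHom {Q : Set ℕ} {p : ℕ} (hp : p.Prime) (hpP : p ∈ P)
    (hpQ : p ∉ Q) (g : denSupportedIn P →+ denSupportedIn Q) : ¬ Function.Injective g := by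
  intro hg
  have := Fact.mk hp
  let one : denSupportedIn P := ⟨1, by exact_mod_cast intCast_mem 1⟩
  set x := ((g one : denSupportedIn Q) : ℚ)
  have hx0 : x ≠ 0 := fun h => one_ne_zero <| congrArg Subtype.val <|
    hg (a₁ := one) (a₂ := 0) (by rw [map_zero]; exact Subtype.ext h)
  set n := (padicValRat p x).toNat + 1
  have hpn : (p : ℚ) ^ n ≠ 0 := pow_ne_zero n (Nat.cast_ne_zero.mpr hp.ne_zero)
  let u : denSupportedIn P := ⟨((p : ℚ) ^ n)⁻¹, inv_prime_pow_mem hp hpP n⟩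
  set y := ((g u : denSupportedIn Q) : ℚ)
  have hxy : (p : ℚ) ^ n * y = x := by
    have hu : (p ^ n) • u = one := Subtype.ext (by simp [u, one, hpn])
    simpa [map_nsmul, y, x] using congrArg (fun z => (g z : ℚ)) hu
  have hy0 : y ≠ 0 := by rintro hy; rw [hy, mul_zero] at hxy; exact hx0 hxy.symm
  have hval : padicValRat p x = n + padicValRat p y := by
    rw [← hxy, padicValRat.mul hpn hy0, padicValRat.pow, padicValRat.self hp.one_lt, mul_one]
  have hy : 0 ≤ padicValRat p y := padicValRat_nonneg hp hpQ (g u).2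
  omega

end Rat.denSupportedIn

/-- The graph of `f`, transported to the primes along an injection `ℕ × Bool ↪ ℕ`. -/
def primeCode (f : ℕ → Bool) : Set ℕ :=
  Set.range fun n => Nat.nth Nat.Prime (Encodable.encode (n, f n))

theorem exists_prime_mem_primeCode_not_mem {f g : ℕ → Bool} (h : f ≠ g) :
    ∃ p, p.Prime ∧ p ∈ primeCode f ∧ p ∉ primeCode g := by
  obtain ⟨n, hn⟩ := Function.ne_iff.mp h
  refine ⟨_, Nat.prime_nth_prime _, ⟨n, rfl⟩, ?_⟩
  rintro ⟨m, hm⟩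
  have hmn := Encodable.encode_injective (Nat.nth_injective Nat.infinite_setOfPred_prime hm)
  rw [Prod.mk.injEq] at hmn
  exact hn (hmn.1 ▸ hmn.2).symm

/-- there exist `2 ^ ℵ₀` pairwise non-embeddable countably infinite groups. -/
theorem stmt_9 :
    ∃ (ι : Type) (G : ι → GrpCat),
      Cardinal.mk ι = 2 ^ Cardinal.aleph0 ∧
      (∀ i, Cardinal.mk (G i) = Cardinal.aleph0) ∧
      (∀ i j, i ≠ j → ¬ ∃ f : G i →* G j, Function.Injective f) := by
  refine ⟨ℕ → Bool, fun f => GrpCat.of (ULift (Multiplicative (Rat.denSupportedIn (primeCode f)))),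
    by simp, fun f => by simp [Cardinal.mk_uLift], ?_⟩
  rintro f g hfg ⟨φ, hφ⟩
  obtain ⟨p, hp, hpf, hpg⟩ := exists_prime_mem_primeCode_not_mem hfg
  let ψ : Multiplicative (Rat.denSupportedIn (primeCode f)) →*
      Multiplicative (Rat.denSupportedIn (primeCode g)) :=
    MulEquiv.ulift.toMonoidHom.comp (φ.comp MulEquiv.ulift.symm.toMonoidHom)
  have hψ : Function.Injective ψ :=
    MulEquiv.ulift.injective.comp (hφ.comp MulEquiv.ulift.symm.injective)
  exact Rat.denSupportedIn.not_injective_addMonoidHom hp hpf hpg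
    (AddMonoidHom.toMultiplicative.symm ψ) hψ
end

section
/- In a free product ∏* of a family of groups, every element g with reduced word length at least 1 satisfies: either g is conjugate to an element of one of the factors, or the reduced length of g^k is at least k for every k ≥ 2. -/
/-!
If the first and last letters of a reduced word lie in the same factor, conjugating by the first
letter merges them into one letter and shortens the word. Hence every `g` is conjugate either to
a single letter or to a cyclically reduced word `w`, whose last and first letters lie in different
factors. The powers of such a `w` are reduced as written, so `ℓ(w ^ n) = n ℓ(w)`. By
subadditivity, `ℓ(y e ^ n y⁻¹) ≤ ℓ(y) + ℓ(y⁻¹) + n ℓ(e)`; the growth rate of `ℓ(e ^ n)` is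
therefore a conjugacy invariant bounded by `ℓ(e)`. For `g = y w y⁻¹` and `e = g ^ k` this gives
`ℓ(g ^ k) ≥ k ℓ(w) ≥ k`.
-/

open Monoid in
/-- The reduced word length of an element of a free product. -/
noncomputable def wordLength {ι : Type*} {G : ι → Type*} [∀ i, Group (G i)]
    (g : CoprodI G) : ℕ :=
  letI := Classical.decEq ι
  letI : ∀ i, DecidableEq (G i) := fun i => Classical.decEq _
  ((CoprodI.Word.equiv (M := G)) g).toList.length

namespace Monoid.CoprodI.Word

variable {ι : Type*} {M : ι → Type*} [∀ i, Monoid (M i)]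

section Length

variable [∀ i, DecidableEq (M i)]

theorem length_rcons_le {i : ι} (p : Pair M i) :
    (rcons p).toList.length ≤ p.tail.toList.length + 1 := by
  rw [rcons]; split <;> simp [cons]

theorem length_tail_le_length_rcons {i : ι} (p : Pair M i) :
    p.tail.toList.length ≤ (rcons p).toList.length := by
  rw [rcons]; split <;> simp [cons]

variable [DecidableEq ι]

theorem length_of_smul_le {i : ι} (m : M i) (w : Word M) :
    (of m • w).toList.length ≤ w.toList.length + 1 := by
  have htail := length_tail_le_length_rcons (equivPair i w)
  rw [← equivPair_symm, Equiv.symm_apply_apply] at htail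
  rw [of_smul_def]
  exact (length_rcons_le _).trans (Nat.add_le_add_right htail 1)

theorem length_prod_smul_le (w v : Word M) :
    (w.prod • v).toList.length ≤ w.toList.length + v.toList.length := by
  induction w using consRecOn with
  | empty => simp
  | cons i m w _ _ ih =>
    rw [prod_cons, mul_smul]
    refine (length_of_smul_le _ _).trans ?_
    simp only [cons, List.length_cons]
    omega

end Length

def append (w₁ w₂ : Word M) (h : ∀ a ∈ w₁.toList.getLast?, ∀ b ∈ w₂.toList.head?, a.1 ≠ b.1) :
    Word M where
  toList := w₁.toList ++ w₂.toList
  ne_one l hl := (List.mem_append.mp hl).elim (w₁.ne_one l) (w₂.ne_one l)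
  chain_ne := List.isChain_append.mpr ⟨w₁.chain_ne, w₂.chain_ne, h⟩

theorem prod_append (w₁ w₂ : Word M) (h) : (append w₁ w₂ h).prod = w₁.prod * w₂.prod := by
  simp [append, prod]

/-- Exactly the condition for `append w w` to be defined. It holds vacuously for the empty word
and fails for every one-letter word. -/
def IsCyclicallyReduced (w : Word M) : Prop :=
  ∀ a ∈ w.toList.getLast?, ∀ b ∈ w.toList.head?, a.1 ≠ b.1

theorem exists_prod_eq_pow {w : Word M} (hw : w.IsCyclicallyReduced) (n : ℕ) :
    ∃ u : Word M, u.prod = w.prod ^ n ∧ u.toList.length = n * w.toList.length := by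
  suffices ∃ u : Word M, u.prod = w.prod ^ n ∧ u.toList.length = n * w.toList.length ∧
      ∀ b ∈ u.toList.head?, b ∈ w.toList.head? from this.imp fun _ h ↦ ⟨h.1, h.2.1⟩
  induction n with
  | zero => exact ⟨empty, by simp [prod_empty], by simp [empty], by simp [empty]⟩
  | succ n ih =>
    obtain ⟨u, hprod, hlen, hhead⟩ := ih
    refine ⟨append w u fun a ha b hb ↦ hw a ha b (hhead b hb), ?_, ?_, ?_⟩
    · rw [prod_append, hprod, pow_succ']
    · simp [append, hlen, Nat.succ_mul, Nat.add_comm]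
    · intro b hb
      simp only [append, List.head?_append, Option.mem_def, Option.or_eq_some_iff] at hb
      rcases hb with hb | ⟨hnil, hb⟩
      · exact hb
      · exact absurd (hhead b hb) (by simp [hnil])

end Monoid.CoprodI.Word

theorem Nat.le_of_forall_mul_le_add_mul {a b c : ℕ} (h : ∀ n, n * a ≤ c + n * b) : a ≤ b := by
  by_contra! hab
  have := h (c + 1)
  nlinarith

namespace Monoid.CoprodI

variable {ι : Type*} {G : ι → Type*} [∀ i, Group (G i)]

theorem wordLength_eq_length_equiv [DecidableEq ι] [∀ i, DecidableEq (G i)] (g : CoprodI G) :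
    wordLength g = (Word.equiv g).toList.length := by
  unfold wordLength
  congr!

theorem wordLength_prod (w : Word G) : wordLength w.prod = w.toList.length := by
  classical
  rw [wordLength_eq_length_equiv]
  exact congrArg (·.toList.length) (Word.equiv.apply_symm_apply w)

theorem wordLength_one : wordLength (1 : CoprodI G) = 0 := by
  simpa [Word.prod_empty] using wordLength_prod (Word.empty : Word G)

theorem wordLength_of_le_one {i : ι} (x : G i) : wordLength (of x) ≤ 1 := by
  classical
  rw [wordLength_eq_length_equiv]
  exact Word.length_of_smul_le x Word.empty

theorem wordLength_mul_le (g h : CoprodI G) :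
    wordLength (g * h) ≤ wordLength g + wordLength h := by
  classical
  simp only [wordLength_eq_length_equiv]
  have hg : (Word.equiv g).prod = g := Word.equiv.symm_apply_apply g
  have hgh : Word.equiv (g * h) = (Word.equiv g).prod • Word.equiv h := by
    rw [hg]; exact mul_smul g h _
  rw [hgh]
  exact Word.length_prod_smul_le _ _

theorem wordLength_pow_le (g : CoprodI G) (n : ℕ) : wordLength (g ^ n) ≤ n * wordLength g := by
  induction n with
  | zero => simp [wordLength_one]
  | succ n ih =>
    rw [pow_succ, Nat.succ_mul]
    exact (wordLength_mul_le _ _).trans (Nat.add_le_add_right ih _)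

theorem Word.IsCyclicallyReduced.wordLength_prod_pow {w : Word G} (hw : w.IsCyclicallyReduced)
    (n : ℕ) : wordLength (w.prod ^ n) = n * w.toList.length := by
  obtain ⟨u, hprod, hlen⟩ := Word.exists_prod_eq_pow hw n
  rw [← hprod, wordLength_prod, hlen]

theorem le_wordLength_of_forall_mul_le_wordLength_conj_pow {a : ℕ} (y e : CoprodI G)
    (h : ∀ n, n * a ≤ wordLength (y * e ^ n * y⁻¹)) : a ≤ wordLength e := by
  refine Nat.le_of_forall_mul_le_add_mul (c := wordLength y + wordLength y⁻¹) fun n ↦ ?_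
  calc n * a ≤ wordLength (y * e ^ n * y⁻¹) := h n
    _ ≤ wordLength y + wordLength (e ^ n) + wordLength y⁻¹ :=
      (wordLength_mul_le _ _).trans (Nat.add_le_add_right (wordLength_mul_le _ _) _)
    _ ≤ wordLength y + wordLength y⁻¹ + n * wordLength e := by
      have := wordLength_pow_le e n
      omega

theorem Word.IsCyclicallyReduced.mul_length_le_wordLength_conj_pow {w : Word G}
    (hw : w.IsCyclicallyReduced) (y : CoprodI G) (k : ℕ) :
    k * w.toList.length ≤ wordLength ((y * w.prod * y⁻¹) ^ k) := by
  refine le_wordLength_of_forall_mul_le_wordLength_conj_pow y⁻¹ _ fun n ↦ ?_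
  have : y⁻¹ * ((y * w.prod * y⁻¹) ^ k) ^ n * y⁻¹⁻¹ = w.prod ^ (k * n) := by
    rw [← pow_mul, conj_pow]
    group
  rw [this, hw.wordLength_prod_pow]
  exact le_of_eq (by ring)

theorem Word.exists_eq_of_or_wordLength_conj_lt {w : Word G} (hw : ¬ w.IsCyclicallyReduced) :
    (∃ (i : ι) (x : G i), w.prod = of x) ∨
      ∃ z, wordLength (z * w.prod * z⁻¹) < w.toList.length := by
  simp only [IsCyclicallyReduced, not_forall, not_not, exists_prop] at hw
  obtain ⟨⟨i, x⟩, hlast, ⟨j, y⟩, hhead, hij : i = j⟩ := hw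
  subst hij
  obtain ⟨t, ht⟩ := List.head?_eq_some_iff.mp hhead
  rcases List.eq_nil_or_concat' t with rfl | ⟨m, c, rfl⟩
  · exact Or.inl ⟨i, y, by simp [prod, ht]⟩
  rw [ht, ← List.cons_append, List.getLast?_concat, Option.mem_some_iff] at hlast
  subst hlast
  let mid : Word G := ⟨m, fun l hl ↦ w.ne_one l (by simp [ht, hl]),
    w.chain_ne.infix ⟨[⟨i, y⟩], [⟨i, x⟩], by simp [ht]⟩⟩
  have hprod : w.prod = of y * mid.prod * of x := by simp [prod, ht, mid, mul_assoc]
  refine Or.inr ⟨of y⁻¹, ?_⟩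
  calc wordLength (of y⁻¹ * w.prod * (of y⁻¹)⁻¹) = wordLength (mid.prod * of (x * y)) := by
        rw [hprod, map_inv, map_mul]
        group
    _ ≤ m.length + 1 := (wordLength_mul_le _ _).trans
      (Nat.add_le_add (wordLength_prod mid).le (wordLength_of_le_one _))
    _ < w.toList.length := by simp [ht]

theorem exists_conj_eq_of_or_isCyclicallyReduced (g : CoprodI G) :
    ∃ y c : CoprodI G, g = y * c * y⁻¹ ∧
      ((∃ (i : ι) (x : G i), c = of x) ∨ ∃ w : Word G, w.IsCyclicallyReduced ∧ c = w.prod) := by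
  classical
  induction hn : wordLength g using Nat.strong_induction_on generalizing g with
  | _ n ih =>
  obtain ⟨w, rfl⟩ : ∃ w : Word G, w.prod = g := ⟨_, Word.equiv.symm_apply_apply g⟩
  by_cases hw : w.IsCyclicallyReduced
  · exact ⟨1, w.prod, by group, Or.inr ⟨w, hw, rfl⟩⟩
  rcases Word.exists_eq_of_or_wordLength_conj_lt hw with ⟨i, x, hx⟩ | ⟨z, hz⟩
  · exact ⟨1, w.prod, by group, Or.inl ⟨i, x, hx⟩⟩
  rw [wordLength_prod] at hn
  obtain ⟨y, c, hyc, hc⟩ := ih _ (hn ▸ hz) _ rfl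
  refine ⟨z⁻¹ * y, c, ?_, hc⟩
  calc w.prod = z⁻¹ * (z * w.prod * z⁻¹) * z := by group
    _ = z⁻¹ * y * c * (z⁻¹ * y)⁻¹ := by rw [hyc]; group

end Monoid.CoprodI

open Monoid in
theorem stmt_11_general {ι : Type*} (G : ι → Type*) [∀ i, Group (G i)]
    (g : CoprodI G) (hg : 1 ≤ wordLength g) :
    (∃ (i : ι) (x : G i) (y : CoprodI G), g = y * CoprodI.of x * y⁻¹) ∨
    (∀ k : ℕ, 2 ≤ k → k ≤ wordLength (g ^ k)) := by
  obtain ⟨y, c, rfl, ⟨i, x, rfl⟩ | ⟨w, hw, rfl⟩⟩ :=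
    CoprodI.exists_conj_eq_of_or_isCyclicallyReduced g
  · exact Or.inl ⟨i, x, y, rfl⟩
  refine Or.inr fun k _ ↦ ?_
  have hw_ne : w.toList ≠ [] := by
    rintro h
    simp [CoprodI.Word.prod, h, CoprodI.wordLength_one] at hg
  calc k ≤ k * w.toList.length := Nat.le_mul_of_pos_right k (List.length_pos_iff.mpr hw_ne)
    _ ≤ wordLength ((y * w.prod * y⁻¹) ^ k) := hw.mul_length_le_wordLength_conj_pow y k

open Monoid in
/-- in a free product, every element `g` of reduced length at least 1 is
either conjugate to an element of a factor, or satisfies `ℓ(g ^ k) ≥ k` for all `k ≥ 2`. -/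
theorem stmt_11 {ι : Type*} [Nonempty ι] (G : ι → Type*) [∀ i, Group (G i)]
    (g : CoprodI G) (hg : 1 ≤ wordLength g) :
    (∃ (i : ι) (x : G i) (y : CoprodI G), g = y * CoprodI.of x * y⁻¹) ∨
    (∀ k : ℕ, 2 ≤ k → k ≤ wordLength (g ^ k)) :=
  stmt_11_general G g hg
end
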